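/- arXiv:1603.07350 — 7 statements merged into one kernel-verified Lean document; each statement's English description precedes it below -/
import Mathlib

section
/- Let x ∈ ℝ^n with ‖x‖ = 1 and p ∈ ℝ^n, α ∈ ℝ, and define the skew-symmetric matrix W = α(xp^T - px^T). Then the matrix I + W is invertible and (I+W)^{-1} x = [(1 - α x^T p) x + α p] / [1 + ‖αp‖² - (α x^T p)²]. -/
open Matrix

lemma vmv_mulVec {n : ℕ} (a b v : Fin n → ℝ) :
    vecMulVec a b *ᵥ v = (b ⬝ᵥ v) • a := by
  ext i
  simp [vecMulVec_apply, mulVec, dotProduct, Finset.mul_sum, mul_assoc, mul_comm, mul_left_comm]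

/-- for a unit vector `x`, the matrix `I + W` with
`W = α(xpᵀ - pxᵀ)` is invertible and
`(I+W)⁻¹ x = [(1 - α xᵀp) x + α p] / [1 + ‖αp‖² - (α xᵀp)²]`. -/
theorem stmt2 {n : ℕ} (x p : Fin n → ℝ) (α : ℝ)
    (hx : x ⬝ᵥ x = 1)
    (W : Matrix (Fin n) (Fin n) ℝ)
    (hW : W = α • (vecMulVec x p - vecMulVec p x)) :
    IsUnit (1 + W) ∧
      (1 + W)⁻¹ *ᵥ x =
        (1 / (1 + α ^ 2 * (p ⬝ᵥ p) - (α * (x ⬝ᵥ p)) ^ 2)) •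
          ((1 - α * (x ⬝ᵥ p)) • x + α • p) := by
  have hWv : ∀ v : Fin n → ℝ, W *ᵥ v = α • ((p ⬝ᵥ v) • x - (x ⬝ᵥ v) • p) := by
    intro v
    rw [hW, smul_mulVec, sub_mulVec, vmv_mulVec, vmv_mulVec]
  -- Cauchy-Schwarz
  have hcs : (x ⬝ᵥ p) ^ 2 ≤ p ⬝ᵥ p := by
    have := Finset.sum_mul_sq_le_sq_mul_sq Finset.univ x p
    simp only [dotProduct] at hx ⊢
    calc (∑ i, x i * p i) ^ 2 ≤ (∑ i, x i ^ 2) * ∑ i, p i ^ 2 := this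
      _ = p ⬝ᵥ p := by
          have h1 : (∑ i, x i ^ 2) = 1 := by simpa [sq] using hx
          rw [h1, one_mul]
          simp [dotProduct, sq]
  set s : ℝ := x ⬝ᵥ p with hs
  set q : ℝ := p ⬝ᵥ p with hqdef
  set c : ℝ := 1 + α ^ 2 * q - (α * s) ^ 2 with hcdef
  have hc1 : (1 : ℝ) ≤ c := by nlinarith [sq_nonneg α]
  have hc0 : c ≠ 0 := by positivity
  -- injectivity ⇒ invertible
  have hinj : Function.Injective (fun v => (1 + W) *ᵥ v) := by
    intro u v huv
    have h0 : (1 + W) *ᵥ (u - v) = 0 := by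
      rw [mulVec_sub]
      simpa using sub_eq_zero_of_eq huv
    set w := u - v with hwdef
    have h1 : w + W *ᵥ w = 0 := by
      rw [add_mulVec, one_mulVec] at h0; exact h0
    have h2 : w ⬝ᵥ (W *ᵥ w) = 0 := by
      rw [hWv w]
      simp only [dotProduct_smul, dotProduct_sub, smul_eq_mul, dotProduct_comm w x,
        dotProduct_comm w p]
      ring
    have h3 : w ⬝ᵥ w = 0 := by
      have := congrArg (fun z => w ⬝ᵥ z) h1
      simpa [dotProduct_add, h2] using this
    have : w = 0 := dotProduct_self_eq_zero.mp h3
    exact sub_eq_zero.mp this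
  have hu : IsUnit (1 + W) := mulVec_injective_iff_isUnit.mp hinj
  refine ⟨hu, ?_⟩
  -- the candidate vector
  set y : (Fin n → ℝ) := (1 / c) • ((1 - α * s) • x + α • p) with hy
  have hWx : W *ᵥ x = α • (s • x - p) := by
    rw [hWv x, dotProduct_comm p x, hx]; simp [hs]
  have hWp : W *ᵥ p = α • (q • x - s • p) := by
    rw [hWv p]
  have key : (1 + W) *ᵥ y = x := by
    rw [add_mulVec, one_mulVec, hy, mulVec_smul, mulVec_add, mulVec_smul, mulVec_smul,
      hWx, hWp]
    match_scalars <;> (field_simp; try ring)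
  have hdet : IsUnit (1 + W).det := (isUnit_iff_isUnit_det _).mp hu
  calc (1 + W)⁻¹ *ᵥ x = (1 + W)⁻¹ *ᵥ ((1 + W) *ᵥ y) := by rw [key]
    _ = ((1 + W)⁻¹ * (1 + W)) *ᵥ y := by rw [mulVec_mulVec]
    _ = y := by rw [nonsing_inv_mul _ hdet, one_mulVec]
end

section
/- Let x ∈ ℝ^n with ‖x‖ = 1, p ∈ ℝ^n, α ∈ ℝ, W = α(xp^T - px^T), and Q = (I-W)(I+W)^{-1}. Then the new point x⁺ = Qx satisfies x⁺ = {[(1 - α x^T p)² - ‖αp‖²] x + 2αp} / [1 + ‖αp‖² - (α x^T p)²], and in particular ‖x⁺‖ = 1. -/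
open Matrix

private lemma Waction {n : ℕ} (x p v : Fin n → ℝ) (α : ℝ)
    (W : Matrix (Fin n) (Fin n) ℝ)
    (hW : W = α • (vecMulVec x p - vecMulVec p x)) :
    W *ᵥ v = α • ((p ⬝ᵥ v) • x - (x ⬝ᵥ v) • p) := by
  subst hW
  ext i
  simp [mulVec, dotProduct, vecMulVec_apply, Finset.mul_sum, Finset.sum_sub_distrib,
    sub_mul, mul_sub, Finset.sum_mul, mul_comm, mul_left_comm]

/-- for a unit vector `x`, with `W = α(xpᵀ - pxᵀ)` and the Cayley
transform `Q = (I-W)(I+W)⁻¹`, the point `x⁺ = Qx` has the explicit form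
`x⁺ = {[(1 - α xᵀp)² - ‖αp‖²] x + 2αp} / [1 + ‖αp‖² - (α xᵀp)²]` and unit norm. -/
theorem stmt3 {n : ℕ} (x p : Fin n → ℝ) (α : ℝ)
    (hx : x ⬝ᵥ x = 1)
    (W Q : Matrix (Fin n) (Fin n) ℝ)
    (hW : W = α • (vecMulVec x p - vecMulVec p x))
    (hQ : Q = (1 - W) * (1 + W)⁻¹)
    (xp : Fin n → ℝ) (hxp : xp = Q *ᵥ x) :
    xp = (1 / (1 + α ^ 2 * (p ⬝ᵥ p) - (α * (x ⬝ᵥ p)) ^ 2)) •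
        (((1 - α * (x ⬝ᵥ p)) ^ 2 - α ^ 2 * (p ⬝ᵥ p)) • x + (2 * α) • p) ∧
      xp ⬝ᵥ xp = 1 := by
  set a : ℝ := x ⬝ᵥ p with ha
  set b : ℝ := p ⬝ᵥ p with hb
  have hab : a ^ 2 ≤ b := by
    have := Finset.sum_mul_sq_le_sq_mul_sq Finset.univ x p
    have hx2 : (∑ i, x i ^ 2) = 1 := by simpa [dotProduct, sq] using hx
    have hb2 : (∑ i, p i ^ 2) = b := by simp [hb, dotProduct, sq]
    simpa [ha, dotProduct, hx2, hb2] using this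
  set d : ℝ := 1 + α ^ 2 * b - (α * a) ^ 2 with hd
  have hdpos : 0 < d := by nlinarith [sq_nonneg α]
  have hdne : d ≠ 0 := ne_of_gt hdpos
  have hpx : p ⬝ᵥ x = a := dotProduct_comm p x
  -- invertibility of 1 + W
  have hdet : IsUnit (1 + W).det := by
    rw [isUnit_iff_ne_zero]
    intro h0
    obtain ⟨v, hv, hmv⟩ := (Matrix.exists_mulVec_eq_zero_iff).2 h0
    apply hv
    have hWv := Waction x p v α W hW
    have h1 : (1 + W) *ᵥ v = v + W *ᵥ v := by rw [add_mulVec, one_mulVec]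
    have h2 : v ⬝ᵥ v + v ⬝ᵥ (W *ᵥ v) = 0 := by
      have := congrArg (fun w => v ⬝ᵥ w) (h1 ▸ hmv)
      simpa [dotProduct_add] using this
    have h3 : v ⬝ᵥ (W *ᵥ v) = 0 := by
      rw [hWv, dotProduct_smul, dotProduct_sub, dotProduct_smul, dotProduct_smul,
        dotProduct_comm v x, dotProduct_comm v p]
      simp only [smul_eq_mul]
      ring
    rw [h3, add_zero] at h2
    exact dotProduct_self_eq_zero.mp h2
  -- the vector v with (1+W) v = x
  set v : Fin n → ℝ := (1 / d) • ((1 - α * a) • x + α • p) with hv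
  have hxv : x ⬝ᵥ v = 1 / d := by
    rw [hv, dotProduct_smul, dotProduct_add, dotProduct_smul, dotProduct_smul, hx, ← ha]
    simp only [smul_eq_mul]
    ring
  have hpv : p ⬝ᵥ v = (1 / d) * ((1 - α * a) * a + α * b) := by
    rw [hv, dotProduct_smul, dotProduct_add, dotProduct_smul, dotProduct_smul, hpx, ← hb]
    simp only [smul_eq_mul]
  have hAv : (1 + W) *ᵥ v = x := by
    rw [add_mulVec, one_mulVec, Waction x p v α W hW, hxv, hpv]
    ext i
    simp [hv, smul_eq_mul]
    field_simp
    ring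
  have hvinv : (1 + W)⁻¹ *ᵥ x = v := by
    rw [← hAv, mulVec_mulVec, Matrix.nonsing_inv_mul _ hdet, one_mulVec]
  have hxpv : xp = v - W *ᵥ v := by
    rw [hxp, hQ, ← mulVec_mulVec, hvinv, sub_mulVec, one_mulVec]
  have hxpform : xp = (1 / d) • (((1 - α * a) ^ 2 - α ^ 2 * b) • x + (2 * α) • p) := by
    rw [hxpv, Waction x p v α W hW, hxv, hpv]
    ext i
    simp [hv, smul_eq_mul]
    field_simp
    ring
  refine ⟨hxpform, ?_⟩
  rw [hxpform]
  simp only [dotProduct_smul, smul_dotProduct, dotProduct_add, add_dotProduct,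
    smul_eq_mul, hx, ← ha, ← hb, hpx, dotProduct_comm p x]
  field_simp
  ring
end

section
/- Let x ∈ ℝ^n with ‖x‖ = 1, p ∈ ℝ^n, α ∈ ℝ, and define x⁺(α) = {[(1 - α x^T p)² - ‖αp‖²] x + 2αp} / [1 + ‖αp‖² - (α x^T p)²]. Then ‖x⁺(α) - x‖² = 4(‖αp‖² - (α x^T p)²) / (1 + ‖αp‖² - (α x^T p)²). -/
open Matrix

/-- the squared Euclidean distance between the updated point
`x⁺(α) = {[(1 - α xᵀp)² - ‖αp‖²] x + 2αp} / [1 + ‖αp‖² - (α xᵀp)²]` and the unit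
vector `x` equals `4(‖αp‖² - (α xᵀp)²) / (1 + ‖αp‖² - (α xᵀp)²)`. -/
theorem stmt4 {n : ℕ} (x p : Fin n → ℝ) (α : ℝ)
    (hx : x ⬝ᵥ x = 1)
    (xp : Fin n → ℝ)
    (hxp : xp = (1 / (1 + α ^ 2 * (p ⬝ᵥ p) - (α * (x ⬝ᵥ p)) ^ 2)) •
        (((1 - α * (x ⬝ᵥ p)) ^ 2 - α ^ 2 * (p ⬝ᵥ p)) • x + (2 * α) • p)) :
    (xp - x) ⬝ᵥ (xp - x) =
      4 * (α ^ 2 * (p ⬝ᵥ p) - (α * (x ⬝ᵥ p)) ^ 2) /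
        (1 + α ^ 2 * (p ⬝ᵥ p) - (α * (x ⬝ᵥ p)) ^ 2) := by
  have hcs : (x ⬝ᵥ p) ^ 2 ≤ (x ⬝ᵥ x) * (p ⬝ᵥ p) := by
    have := Finset.sum_mul_sq_le_sq_mul_sq Finset.univ x p
    simpa [dotProduct, pow_two] using this
  have hD : (1 : ℝ) + α ^ 2 * (p ⬝ᵥ p) - (α * (x ⬝ᵥ p)) ^ 2 ≠ 0 := by
    nlinarith [sq_nonneg α, sq_nonneg (x ⬝ᵥ p)]
  subst hxp
  simp only [smul_dotProduct, dotProduct_smul, add_dotProduct, dotProduct_add,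
    sub_dotProduct, dotProduct_sub, smul_eq_mul, hx, dotProduct_comm p x]
  generalize hd : (1 + α ^ 2 * (p ⬝ᵥ p) - (α * (x ⬝ᵥ p)) ^ 2) = D at hD ⊢; field_simp; rw [← hd]
  ring
end

section
/- Let f: ℝ^n → ℝ be continuously differentiable with gradient g, let x ∈ ℝ^n be a unit vector with x^T g(x) = 0 and g(x) ≠ 0, let p ∈ ℝ^n satisfy p^T g(x) < 0, and define x(α) = {[(1 - α x^T p)² - ‖αp‖²] x + 2αp} / [1 + ‖αp‖² - (α x^T p)²]. Then the derivative of α ↦ f(x(α)) at α = 0 equals 2 p^T g(x) < 0; consequently, for any η ∈ (0,1) there exists ᾱ > 0 such that f(x(α)) ≤ f(x) + η α p^T g(x) for all α ∈ (0, ᾱ]. -/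
open RealInnerProductSpace

/-- along the curvilinear search path
`x(α) = {[(1 - α xᵀp)² - ‖αp‖²] x + 2αp} / [1 + ‖αp‖² - (α xᵀp)²]`,
the derivative of `α ↦ f(x(α))` at `α = 0` is `2 pᵀg(x) < 0`, and for any
`η ∈ (0,1)` the sufficient decrease condition holds for all small `α > 0`. -/
theorem stmt6 {n : ℕ} (f : EuclideanSpace ℝ (Fin n) → ℝ)
    (g : EuclideanSpace ℝ (Fin n) → EuclideanSpace ℝ (Fin n))
    (hf : ContDiff ℝ 1 f)
    (hg : ∀ y, HasGradientAt f (g y) y)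
    (x p : EuclideanSpace ℝ (Fin n))
    (hx : ‖x‖ = 1) (hxg : ⟪x, g x⟫ = 0) (hgx : g x ≠ 0)
    (hp : ⟪p, g x⟫ < 0)
    (xc : ℝ → EuclideanSpace ℝ (Fin n))
    (hxc : ∀ α : ℝ, xc α =
      (1 / (1 + ‖α • p‖ ^ 2 - (α * ⟪x, p⟫) ^ 2)) •
        (((1 - α * ⟪x, p⟫) ^ 2 - ‖α • p‖ ^ 2) • x + (2 * α) • p)) :
    HasDerivAt (fun α : ℝ => f (xc α)) (2 * ⟪p, g x⟫) 0 ∧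
      2 * ⟪p, g x⟫ < 0 ∧
      ∀ η : ℝ, η ∈ Set.Ioo (0 : ℝ) 1 →
        ∃ ᾱ > (0 : ℝ), ∀ α ∈ Set.Ioc (0 : ℝ) ᾱ,
          f (xc α) ≤ f x + η * α * ⟪p, g x⟫ := by
  set c : ℝ := ⟪x, p⟫ with hc
  have key : ∀ α : ℝ, xc α =
      (((1 - α * c) ^ 2 - α ^ 2 * ‖p‖ ^ 2) /
        (1 + α ^ 2 * ‖p‖ ^ 2 - (α * c) ^ 2)) • x +
      (2 * α / (1 + α ^ 2 * ‖p‖ ^ 2 - (α * c) ^ 2)) • p := by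
    intro α
    have hn : ‖α • p‖ ^ 2 = α ^ 2 * ‖p‖ ^ 2 := by
      rw [norm_smul, mul_pow, Real.norm_eq_abs, sq_abs]
    rw [hxc α, hn, smul_add, smul_smul, smul_smul]
    congr 1 <;> ring_nf
  have x0 : xc 0 = x := by
    rw [key 0]; norm_num
  -- derivative of the scalar coefficients
  have hD : HasDerivAt (fun α : ℝ => 1 + α ^ 2 * ‖p‖ ^ 2 - (α * c) ^ 2) 0 0 := by
    have h1 : HasDerivAt (fun α : ℝ => 1 + α ^ 2 * ‖p‖ ^ 2)
        (2 * (0:ℝ) ^ 1 * ‖p‖ ^ 2) 0 :=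
      ((hasDerivAt_pow 2 (0:ℝ)).mul_const (‖p‖ ^ 2)).const_add 1
    have h2 : HasDerivAt (fun α : ℝ => (α * c) ^ 2) 0 0 := by
      simpa [Pi.pow_def] using ((hasDerivAt_id (0:ℝ)).mul_const c).pow 2
    simpa [Pi.sub_def] using h1.sub h2
  have hs : HasDerivAt (fun α : ℝ =>
      ((1 - α * c) ^ 2 - α ^ 2 * ‖p‖ ^ 2) /
        (1 + α ^ 2 * ‖p‖ ^ 2 - (α * c) ^ 2)) (-(2 * c)) 0 := by
    have h1 : HasDerivAt (fun α : ℝ => 1 - α * c) (-c) 0 := by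
      simpa using ((hasDerivAt_id (0:ℝ)).mul_const c).const_sub 1
    have h2 : HasDerivAt (fun α : ℝ => (1 - α * c) ^ 2)
        (((2:ℕ) * (1 - (0:ℝ) * c) ^ 1) * (-c)) 0 := h1.pow 2
    have h3 : HasDerivAt (fun α : ℝ => α ^ 2 * ‖p‖ ^ 2)
        (2 * (0:ℝ) ^ 1 * ‖p‖ ^ 2) 0 :=
      (hasDerivAt_pow 2 (0:ℝ)).mul_const (‖p‖ ^ 2)
    have hnum : HasDerivAt (fun α : ℝ => (1 - α * c) ^ 2 - α ^ 2 * ‖p‖ ^ 2)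
        (-(2 * c)) 0 := by simpa [Pi.sub_def] using h2.sub h3
    have := hnum.div hD (by norm_num)
    simpa [Pi.div_def] using this
  have ht : HasDerivAt (fun α : ℝ =>
      2 * α / (1 + α ^ 2 * ‖p‖ ^ 2 - (α * c) ^ 2)) 2 0 := by
    have hnum : HasDerivAt (fun α : ℝ => 2 * α) 2 0 := by
      simpa using (hasDerivAt_id (0:ℝ)).const_mul 2
    have := hnum.div hD (by norm_num)
    simpa [Pi.div_def] using this
  have hxc' : HasDerivAt xc ((-(2 * c)) • x + (2:ℝ) • p) 0 := by
    have h := (hs.smul_const x).add (ht.smul_const p)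
    exact h.congr_of_eventuallyEq (Filter.Eventually.of_forall fun α => key α)
  -- chain rule
  have hgrad : HasFDerivAt f (InnerProductSpace.toDual ℝ _ (g x)) (xc 0) := by
    rw [x0]; exact (hg x).hasFDerivAt
  have hcomp : HasDerivAt (fun α : ℝ => f (xc α)) (2 * ⟪p, g x⟫) 0 := by
    have h := hgrad.comp_hasDerivAt (0:ℝ) hxc'
    have hval : (InnerProductSpace.toDual ℝ _ (g x)) ((-(2 * c)) • x + (2:ℝ) • p)
        = 2 * ⟪p, g x⟫ := by
      have hgxx : ⟪g x, x⟫ = 0 := by rw [real_inner_comm]; exact hxg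
      simp [InnerProductSpace.toDual_apply_apply, inner_add_right, inner_smul_right,
        real_inner_smul_right, hgxx, real_inner_comm (g x) p]
    rw [hval] at h
    exact h
  have hneg : 2 * ⟪p, g x⟫ < 0 := by linarith
  refine ⟨hcomp, hneg, ?_⟩
  intro η hη
  have hlt : 2 * ⟪p, g x⟫ < η * ⟪p, g x⟫ := by nlinarith [hη.1, hη.2, hp]
  have hslope := hasDerivAt_iff_tendsto_slope.mp hcomp
  have hev : ∀ᶠ α in nhdsWithin (0:ℝ) (Set.Ioi 0),
      slope (fun α : ℝ => f (xc α)) 0 α < η * ⟪p, g x⟫ := by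
    have h1 : ∀ᶠ α in nhdsWithin (0:ℝ) {(0:ℝ)}ᶜ,
        slope (fun α : ℝ => f (xc α)) 0 α < η * ⟪p, g x⟫ :=
      hslope.eventually_lt_const hlt
    exact h1.filter_mono (nhdsWithin_mono _ (fun a ha => ne_of_gt ha))
  rcases (mem_nhdsGT_iff_exists_Ioc_subset).mp hev with ⟨u, hu, hsub⟩
  refine ⟨u, hu, fun α hα => ?_⟩
  have hα0 : 0 < α := hα.1
  have hs := hsub hα
  simp only [Set.mem_setOf_eq, slope_def_field] at hs
  have : (f (xc α) - f (xc 0)) / α < η * ⟪p, g x⟫ := by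
    simpa [div_eq_inv_mul, sub_zero] using hs
  rw [x0] at this
  rw [div_lt_iff₀ hα0] at this
  nlinarith
end

section
/- Let H be a symmetric positive definite n×n matrix, s, y ∈ ℝ^n with y^T s ≥ κ > 0, ‖s‖ ≤ 2, ‖y‖ ≤ 2M, ρ = 1/(y^T s), V = I - ρ y s^T, and H⁺ = V^T H V + ρ s s^T. Then H⁺ is positive definite and its smallest eigenvalue satisfies μ_min(H⁺) ≥ κ/(κ + 4M²‖H‖) · μ_min(H). -/
open Matrix RealInnerProductSpace
open scoped Matrix.Norms.L2Operator

open scoped MatrixOrder in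
/-- Cauchy–Schwarz in the `H`-inner product. -/
lemma dot_cs {n : ℕ} {H : Matrix (Fin n) (Fin n) ℝ} (hH : H.PosSemidef)
    (x z : Fin n → ℝ) :
    (x ⬝ᵥ (H *ᵥ z)) ^ 2 ≤ (x ⬝ᵥ (H *ᵥ x)) * (z ⬝ᵥ (H *ᵥ z)) := by
  set B := CFC.sqrt H with hB
  have hBB : B * B = H := CFC.sqrt_mul_sqrt_self H hH.nonneg
  have hBsymm : Bᵀ = B := by
    rw [← conjTranspose_eq_transpose_of_trivial]
    exact (nonneg_iff_posSemidef.mp (CFC.sqrt_nonneg H)).1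
  have key : ∀ w v : Fin n → ℝ, w ⬝ᵥ (H *ᵥ v) = (B *ᵥ w) ⬝ᵥ (B *ᵥ v) := by
    intro w v
    rw [← hBB, ← mulVec_mulVec, dotProduct_mulVec, ← mulVec_transpose, hBsymm]
  rw [key x z, key x x, key z z]
  have h1 : ∀ w : Fin n → ℝ, w ⬝ᵥ w = ∑ i, w i ^ 2 := by
    intro w; simp [dotProduct, pow_two]
  rw [h1, h1]
  simpa [dotProduct] using Finset.sum_mul_sq_le_sq_mul_sq Finset.univ (B *ᵥ x) (B *ᵥ z)

/-- dotProduct is the Euclidean inner product. -/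
lemma dot_inner {n : ℕ} (a b : EuclideanSpace ℝ (Fin n)) :
    (a : Fin n → ℝ) ⬝ᵥ (b : Fin n → ℝ) = ⟪a, b⟫ := by
  simp [dotProduct, PiLp.inner_apply, RCLike.inner_apply, conj_trivial, mul_comm]

/-- an eigenvalue lower bound from the quadratic form. -/
lemma eig_ge {n : ℕ} {A : Matrix (Fin n) (Fin n) ℝ} (hA : A.IsHermitian) (c : ℝ)
    (h : ∀ x : Fin n → ℝ, c * (x ⬝ᵥ x) ≤ x ⬝ᵥ (A *ᵥ x)) (i : Fin n) :
    c ≤ hA.eigenvalues i := by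
  have hv := hA.eigenvalues_eq i
  set v : Fin n → ℝ := ⇑(hA.eigenvectorBasis i) with hvdef
  have hstar : star v = v := by
    funext j; simp
  have hnorm : v ⬝ᵥ v = 1 := by
    have h1 : ‖hA.eigenvectorBasis i‖ = 1 := hA.eigenvectorBasis.orthonormal.1 i
    have h2 := dot_inner (hA.eigenvectorBasis i) (hA.eigenvectorBasis i)
    rw [real_inner_self_eq_norm_sq, h1] at h2
    simpa using h2
  have := h v
  rw [hnorm, mul_one] at this
  rw [hv, hstar]
  simpa using this

/-- Rayleigh quotient lower bound via the smallest eigenvalue. -/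
lemma rayleigh_lb {n : ℕ} {A : Matrix (Fin n) (Fin n) ℝ} (hA : A.IsHermitian)
    (x : Fin n → ℝ) : (⨅ i, hA.eigenvalues i) * (x ⬝ᵥ x) ≤ x ⬝ᵥ (A *ᵥ x) := by
  rcases Nat.eq_zero_or_pos n with h0 | hpos
  · subst h0
    simp [dotProduct]
  · haveI : Nonempty (Fin n) := ⟨⟨0, hpos⟩⟩
    set μ := ⨅ j, hA.eigenvalues j with hμ
    have hmono : ∀ i, μ ≤ hA.eigenvalues i := fun i =>
      ciInf_le (Set.Finite.bddBelow (Set.finite_range _)) i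
    have hps : (A - μ • 1).PosSemidef := by
      set U : Matrix (Fin n) (Fin n) ℝ := (hA.eigenvectorUnitary : Matrix (Fin n) (Fin n) ℝ) with hUdef
      have hspec : A = U * diagonal (RCLike.ofReal ∘ hA.eigenvalues) * Uᴴ := by
        rw [← star_eq_conjTranspose]; exact hA.spectral_theorem
      have hU : U * Uᴴ = 1 := by
        simpa [star_eq_conjTranspose] using
          (Matrix.mem_unitaryGroup_iff.mp hA.eigenvectorUnitary.2)
      have hD : diagonal (fun i => hA.eigenvalues i - μ) =
          diagonal (RCLike.ofReal ∘ hA.eigenvalues) - μ • 1 := by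
        rw [smul_one_eq_diagonal, ← diagonal_sub]
        rfl
      have h1 : A - μ • 1 = U * diagonal (fun i => hA.eigenvalues i - μ) * Uᴴ := by
        rw [hD, mul_sub, sub_mul, ← hspec, Matrix.mul_smul, Matrix.smul_mul, mul_one, hU]
      rw [h1]
      exact (Matrix.PosSemidef.diagonal
        (fun i => sub_nonneg.mpr (hmono i))).mul_mul_conjTranspose_same _
    have h2 := hps.dotProduct_mulVec_nonneg x
    have hstar : star x = x := by funext j; simp
    rw [hstar, sub_mulVec, dotProduct_sub, smul_mulVec, one_mulVec,
      dotProduct_smul, smul_eq_mul, sub_nonneg] at h2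
    exact h2

/-- the BFGS update of a symmetric positive definite matrix is
positive definite, and its smallest eigenvalue satisfies
`μ_min(H⁺) ≥ κ/(κ + 4M²‖H‖) · μ_min(H)`. -/
theorem stmt8 {n : ℕ} (s y : EuclideanSpace ℝ (Fin n)) (M κ ρ : ℝ)
    (hκpos : 0 < κ) (hys : κ ≤ ⟪y, s⟫)
    (hs : ‖s‖ ≤ 2) (hy : ‖y‖ ≤ 2 * M)
    (hρ : ρ = 1 / ⟪y, s⟫)
    (H V Hp : Matrix (Fin n) (Fin n) ℝ)
    (hH : H.PosDef)
    (hV : V = 1 - ρ • vecMulVec (y : Fin n → ℝ) (s : Fin n → ℝ))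
    (hHp : Hp = Vᵀ * H * V + ρ • vecMulVec (s : Fin n → ℝ) (s : Fin n → ℝ)) :
    Hp.PosDef ∧
      ∀ (hHe : H.IsHermitian) (hHpe : Hp.IsHermitian),
        κ / (κ + 4 * M ^ 2 * ‖H‖) * ⨅ i, hHe.eigenvalues i ≤
          ⨅ i, hHpe.eigenvalues i := by
  have hstar : ∀ x : Fin n → ℝ, star x = x := fun x => funext fun i => rfl
  set sv : Fin n → ℝ := (s : Fin n → ℝ) with hsv
  set yv : Fin n → ℝ := (y : Fin n → ℝ) with hyv
  have hyspos : 0 < ⟪y, s⟫ := lt_of_lt_of_le hκpos hys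
  have hρpos : 0 < ρ := by rw [hρ]; positivity
  have hHsymm : Hᵀ = H := by
    rw [← conjTranspose_eq_transpose_of_trivial]; exact hH.1
  -- symmetric bilinear form facts
  have hsymm : ∀ w v : Fin n → ℝ, w ⬝ᵥ (H *ᵥ v) = v ⬝ᵥ (H *ᵥ w) := by
    intro w v
    rw [dotProduct_mulVec, ← mulVec_transpose, hHsymm, dotProduct_comm]
  set g : ℝ := yv ⬝ᵥ (H *ᵥ yv) with hgdef
  have hg0 : 0 ≤ g := by
    have := hH.posSemidef.dotProduct_mulVec_nonneg yv; rwa [hstar] at this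
  set D : ℝ := 1 + ρ * g with hDdef
  have hDpos : 0 < D := by positivity
  -- Hermitian-ness of Hp
  have hherm : Hp.IsHermitian := by
    rw [hHp]
    apply IsHermitian.add
    · have : Vᵀ = Vᴴ := (conjTranspose_eq_transpose_of_trivial V).symm
      rw [this]
      exact isHermitian_conjTranspose_mul_mul V hH.1
    · show (ρ • vecMulVec sv sv)ᴴ = ρ • vecMulVec sv sv
      ext i j
      simp [conjTranspose_apply, vecMulVec_apply, mul_comm]
  -- the quadratic form identity
  have hVx : ∀ x : Fin n → ℝ, V *ᵥ x = x - (ρ * (sv ⬝ᵥ x)) • yv := by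
    intro x
    rw [hV, sub_mulVec, one_mulVec, smul_mulVec]
    congr 1
    funext i
    simp only [mulVec, vecMulVec_apply, Pi.smul_apply, smul_eq_mul, dotProduct]
    simp only [Finset.sum_mul, Finset.mul_sum]
    exact Finset.sum_congr rfl fun j _ => by ring
  have hQ : ∀ x : Fin n → ℝ, x ⬝ᵥ (Hp *ᵥ x) =
      (x - (ρ * (sv ⬝ᵥ x)) • yv) ⬝ᵥ (H *ᵥ (x - (ρ * (sv ⬝ᵥ x)) • yv)) +
        ρ * (sv ⬝ᵥ x) ^ 2 := by
    intro x
    rw [hHp, add_mulVec, dotProduct_add]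
    congr 1
    · rw [← Matrix.mulVec_mulVec, ← Matrix.mulVec_mulVec, dotProduct_mulVec x Vᵀ,
        vecMul_transpose, hVx x]
    · rw [smul_mulVec, dotProduct_smul, smul_eq_mul]
      have : vecMulVec sv sv *ᵥ x = (sv ⬝ᵥ x) • sv := by
        funext i
        simp only [mulVec, vecMulVec_apply, Pi.smul_apply, smul_eq_mul, dotProduct]
        simp only [Finset.sum_mul, Finset.mul_sum]
        exact Finset.sum_congr rfl fun j _ => by ring
      rw [this, dotProduct_smul, smul_eq_mul, dotProduct_comm]
      ring
  have hkey : ∀ x : Fin n → ℝ, (x ⬝ᵥ (H *ᵥ x)) / D ≤ x ⬝ᵥ (Hp *ᵥ x) := by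
    intro x
    rw [hQ x, div_le_iff₀ hDpos]
    set t := sv ⬝ᵥ x with ht
    set a := x ⬝ᵥ (H *ᵥ x) with ha
    set b := x ⬝ᵥ (H *ᵥ yv) with hb
    have hexp : (x - (ρ * t) • yv) ⬝ᵥ (H *ᵥ (x - (ρ * t) • yv))
        = a - 2 * (ρ * t) * b + (ρ * t) ^ 2 * g := by
      simp only [mulVec_sub, mulVec_smul, sub_dotProduct, dotProduct_sub,
        smul_dotProduct, dotProduct_smul, smul_eq_mul]
      rw [hsymm yv x]
      ring
    have hcs : b ^ 2 ≤ a * g := dot_cs hH.posSemidef x yv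
    rw [hexp, hDdef]
    nlinarith [mul_nonneg hρpos.le (sub_nonneg.2 hcs),
      mul_nonneg hρpos.le (sq_nonneg (b - t * (1 + ρ * g)))]
  constructor
  · refine Matrix.PosDef.of_dotProduct_mulVec_pos hherm fun x hx => ?_
    rw [hstar x, hQ x]
    rcases eq_or_ne (sv ⬝ᵥ x) 0 with h0 | h0
    · have hx' := hH.dotProduct_mulVec_pos hx
      rw [hstar x] at hx'
      simpa [h0] using hx'
    · have h1 := hH.posSemidef.dotProduct_mulVec_nonneg (x - (ρ * (sv ⬝ᵥ x)) • yv)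
      rw [hstar] at h1
      have h2 : 0 < ρ * (sv ⬝ᵥ x) ^ 2 := by positivity
      linarith
  · intro hHe hHpe
    rcases Nat.eq_zero_or_pos n with h0 | hpos
    · subst h0
      simp [iInf_of_isEmpty, Real.sInf_empty]
    haveI : Nonempty (Fin n) := ⟨⟨0, hpos⟩⟩
    set μ := ⨅ i, hHe.eigenvalues i with hμ
    have hμ0 : 0 ≤ μ := le_ciInf fun i => hH.posSemidef.eigenvalues_nonneg i
    have hnorm : (0:ℝ) ≤ ‖H‖ := norm_nonneg H
    have hM0 : 0 ≤ M := by have := norm_nonneg y; linarith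
    have hden : 0 < κ + 4 * M ^ 2 * ‖H‖ := by
      have : (0:ℝ) ≤ 4 * M ^ 2 * ‖H‖ := by positivity
      linarith
    have hg4 : g ≤ 4 * M ^ 2 * ‖H‖ := by
      set Hy : EuclideanSpace ℝ (Fin n) := (EuclideanSpace.equiv (Fin n) ℝ).symm (H *ᵥ yv)
        with hHy
      have h1 : g = ⟪y, Hy⟫ := by rw [← dot_inner]; rfl
      have h2 := real_inner_le_norm y Hy
      have h3 : ‖Hy‖ ≤ ‖H‖ * ‖y‖ := Matrix.l2_opNorm_mulVec H y
      have h4 : ⟪y, Hy⟫ ≤ ‖y‖ * (‖H‖ * ‖y‖) :=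
        le_trans h2 (mul_le_mul_of_nonneg_left h3 (norm_nonneg y))
      have h5 : ‖y‖ ^ 2 ≤ (2 * M) ^ 2 := by nlinarith [norm_nonneg y]
      have h6 : ‖H‖ * ‖y‖ ^ 2 ≤ ‖H‖ * (2 * M) ^ 2 := mul_le_mul_of_nonneg_left h5 hnorm
      rw [h1]
      nlinarith [h4, h6]
    have hκρ : κ * ρ ≤ 1 := by
      rw [hρ, mul_one_div]
      exact (div_le_one hyspos).mpr hys
    have hcD : (κ / (κ + 4 * M ^ 2 * ‖H‖)) * D ≤ 1 := by
      rw [div_mul_eq_mul_div, div_le_one hden, hDdef]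
      nlinarith [mul_le_mul_of_nonneg_right hκρ hg0, hg4]
    have hc1 : (0:ℝ) ≤ κ / (κ + 4 * M ^ 2 * ‖H‖) := by positivity
    have hlow : ∀ x : Fin n → ℝ,
        (κ / (κ + 4 * M ^ 2 * ‖H‖) * μ) * (x ⬝ᵥ x) ≤ x ⬝ᵥ (Hp *ᵥ x) := by
      intro x
      have h1 : μ * (x ⬝ᵥ x) ≤ x ⬝ᵥ (H *ᵥ x) := rayleigh_lb hHe x
      have hxx : 0 ≤ x ⬝ᵥ x := Finset.sum_nonneg fun i _ => mul_self_nonneg _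
      have h2 := hkey x
      have hμxx : 0 ≤ μ * (x ⬝ᵥ x) := mul_nonneg hμ0 hxx
      have h3 : (κ / (κ + 4 * M ^ 2 * ‖H‖) * μ) * (x ⬝ᵥ x) ≤ (μ * (x ⬝ᵥ x)) / D := by
        rw [le_div_iff₀ hDpos]
        calc (κ / (κ + 4 * M ^ 2 * ‖H‖) * μ) * (x ⬝ᵥ x) * D
            = (κ / (κ + 4 * M ^ 2 * ‖H‖) * D) * (μ * (x ⬝ᵥ x)) := by ring
          _ ≤ 1 * (μ * (x ⬝ᵥ x)) := mul_le_mul_of_nonneg_right hcD hμxx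
          _ = μ * (x ⬝ᵥ x) := one_mul _
      have h4 : (μ * (x ⬝ᵥ x)) / D ≤ (x ⬝ᵥ (H *ᵥ x)) / D := by gcongr
      linarith
    exact le_ciInf fun i => eig_ge hHpe _ hlow i
end

section
/- Let x, p, g be nonzero vectors in ℝ^n with x^T g = 0, and suppose -p^T g ≥ C_L ‖g‖² and ‖p‖ ≤ C_U ‖g‖ with 0 < C_L ≤ C_U. Then sin⟨x,p⟩ ≥ C_L/C_U, where ⟨x,p⟩ = arccos(x^T p/(‖x‖‖p‖)). -/
open RealInnerProductSpace

set_option maxHeartbeats 1000000 in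
/-- if `xᵀg = 0`, `-pᵀg ≥ C_L‖g‖²`, and `‖p‖ ≤ C_U‖g‖` with
`0 < C_L ≤ C_U`, then `sin⟨x,p⟩ ≥ C_L/C_U` where
`⟨x,p⟩ = arccos(xᵀp/(‖x‖‖p‖))`. -/
theorem stmt12 {n : ℕ} (x p g : EuclideanSpace ℝ (Fin n))
    (hx : x ≠ 0) (hp : p ≠ 0) (hg : g ≠ 0)
    (hxg : ⟪x, g⟫ = 0)
    (C_L C_U : ℝ) (hCL : 0 < C_L) (hCLU : C_L ≤ C_U)
    (hpg : C_L * ‖g‖ ^ 2 ≤ -⟪p, g⟫) (hpn : ‖p‖ ≤ C_U * ‖g‖) :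
    C_L / C_U ≤ Real.sin (Real.arccos (⟪x, p⟫ / (‖x‖ * ‖p‖))) := by
  have hG : (0:ℝ) < ‖g‖ := norm_pos_iff.mpr hg
  have hP : (0:ℝ) < ‖p‖ := norm_pos_iff.mpr hp
  have hX : (0:ℝ) < ‖x‖ := norm_pos_iff.mpr hx
  set a : ℝ := ⟪p, g⟫ / ‖g‖ ^ 2 with ha
  set q : EuclideanSpace ℝ (Fin n) := p - a • g with hq
  have hgg : ⟪g, g⟫ = ‖g‖ ^ 2 := real_inner_self_eq_norm_sq g
  have hqg : ⟪q, g⟫ = 0 := by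
    simp only [hq, inner_sub_left, real_inner_smul_left, ha, hgg]
    field_simp
    ring
  have hqag : ⟪q, a • g⟫ = 0 := by
    rw [real_inner_smul_right, hqg, mul_zero]
  have hxp : ⟪x, p⟫ = ⟪x, q⟫ := by
    rw [hq, inner_sub_right, real_inner_smul_right, hxg, mul_zero, sub_zero]
  have hpq : p = q + a • g := by simp [hq]
  have hpyth : ‖p‖ ^ 2 = ‖q‖ ^ 2 + a ^ 2 * ‖g‖ ^ 2 := by
    rw [hpq, norm_add_sq_real, hqag, norm_smul, mul_pow, Real.norm_eq_abs, sq_abs]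
    ring
  have hcs : |⟪x, q⟫| ≤ ‖x‖ * ‖q‖ := abs_real_inner_le_norm x q
  have hag : ⟪p, g⟫ = a * ‖g‖ ^ 2 := by
    rw [ha]; field_simp
  rw [Real.sin_arccos]
  have hc0 : 0 ≤ C_L / C_U := le_of_lt (div_pos hCL (lt_of_lt_of_le hCL hCLU))
  have hc0' : 0 < C_L / C_U := div_pos hCL (lt_of_lt_of_le hCL hCLU)
  rw [Real.le_sqrt' hc0']
  have hCU : 0 < C_U := lt_of_lt_of_le hCL hCLU
  -- key: a^2 * ‖g‖^2 ≥ C_L^2 * ‖g‖^2 and ‖p‖^2 ≤ C_U^2 ‖g‖^2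
  have h1 : C_L * ‖g‖ ^ 2 ≤ -(a * ‖g‖ ^ 2) := by rw [← hag]; exact hpg
  have h2 : C_L ≤ -a := by
    have := mul_le_mul_of_nonneg_right h1 (le_of_lt (by positivity : (0:ℝ) < (‖g‖^2)⁻¹))
    calc C_L = C_L * ‖g‖^2 * (‖g‖^2)⁻¹ := by field_simp
    _ ≤ -(a * ‖g‖^2) * (‖g‖^2)⁻¹ := this
    _ = -a := by field_simp
  have hP2 : ‖p‖ ^ 2 ≤ C_U ^ 2 * ‖g‖ ^ 2 := by nlinarith
  have ht2 : (⟪x, p⟫ / (‖x‖ * ‖p‖)) ^ 2 ≤ ‖q‖ ^ 2 / ‖p‖ ^ 2 := by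
    rw [div_pow, mul_pow, div_le_div_iff₀ (by positivity) (by positivity)]
    have : ⟪x, p⟫ ^ 2 ≤ ‖x‖ ^ 2 * ‖q‖ ^ 2 := by
      rw [hxp]
      nlinarith [sq_abs ⟪x, q⟫, abs_nonneg ⟪x, q⟫, norm_nonneg x, norm_nonneg q]
    nlinarith [norm_nonneg p]
  have hkey : (C_L / C_U) ^ 2 ≤ a ^ 2 * ‖g‖ ^ 2 / ‖p‖ ^ 2 := by
    rw [div_pow, div_le_div_iff₀ (by positivity) (by positivity)]
    have ha2 : C_L ^ 2 ≤ a ^ 2 := by nlinarith [sq_nonneg (a + C_L)]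
    nlinarith [mul_le_mul ha2 hP2 (by positivity : (0:ℝ) ≤ ‖p‖ ^ 2) (sq_nonneg a)]
  have : ‖q‖ ^ 2 / ‖p‖ ^ 2 + a ^ 2 * ‖g‖ ^ 2 / ‖p‖ ^ 2 = 1 := by
    rw [← add_div, ← hpyth]
    field_simp
  linarith [ht2, hkey]
end

section
/- Let f: ℝ^n → ℝ and g: ℝ^n → ℝ^n be functions, and let x*, x₁ ∈ ℝ^n, ρ > 0, θ ∈ [0,1), and constants C_U ≥ C_L > 0, η ∈ (0,1), C_K > 0. Suppose (x_c)_{c≥1} is a sequence starting at x₁ such that for all c: (i) whenever x_c lies in the closed ball B(x*, ρ), the KL inequality |f(x_c) - f(x*)|^θ ≤ C_K ‖g(x_c)‖ holds; (ii) f(x_c) - f(x_{c+1}) ≥ η α_c C_L ‖g(x_c)‖² with α_c > 0; (iii) ‖x_{c+1} - x_c‖ ≤ 2 α_c C_U ‖g(x_c)‖; and (iv) f(x_c) ≥ f(x*) for all c. If ρ > (2 C_U C_K)/(η C_L (1-θ)) |f(x₁) - f(x*)|^{1-θ} + ‖x₁ - x*‖, then every iterate x_c remains in B(x*, ρ), and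 ∑_{c=1}^∞ ‖x_{c+1} - x_c‖ ≤ (2 C_U C_K)/(η C_L (1-θ)) |f(x₁) - f(x*)|^{1-θ}. -/
open Metric

/-- Tangent-line (concavity) inequality for `t ↦ t ^ p`, `0 < p ≤ 1`. -/
lemma stmt17_concave {a b p : ℝ} (ha : 0 < a) (hb : 0 ≤ b)
    (hp : 0 < p) (hp1 : p ≤ 1) :
    p * (a - b) ≤ (a ^ p - b ^ p) * a ^ (1 - p) := by
  have hs : -1 ≤ b / a - 1 := by
    have : 0 ≤ b / a := div_nonneg hb ha.le
    linarith
  have h1 := rpow_one_add_le_one_add_mul_self hs hp.le hp1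
  rw [show 1 + (b / a - 1) = b / a by ring, Real.div_rpow hb ha.le] at h1
  have hap : 0 < a ^ p := Real.rpow_pos_of_pos ha p
  have hat : 0 < a ^ (1 - p) := Real.rpow_pos_of_pos ha (1 - p)
  have hmul : a ^ p * a ^ (1 - p) = a := by
    rw [← Real.rpow_add ha]; norm_num
  have h2 : b ^ p ≤ a ^ p * (1 + p * (b / a - 1)) := by
    have := mul_le_mul_of_nonneg_left h1 hap.le
    rwa [mul_div_cancel₀ _ hap.ne'] at this
  have hba' : b / a * a = b := div_mul_cancel₀ _ ha.ne'
  have h3 : b ^ p * a ^ (1 - p) ≤ a + p * (b - a) := by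
    calc b ^ p * a ^ (1 - p) ≤ a ^ p * (1 + p * (b / a - 1)) * a ^ (1 - p) :=
          mul_le_mul_of_nonneg_right h2 hat.le
      _ = a ^ p * a ^ (1 - p) * (1 + p * (b / a - 1)) := by ring
      _ = a * (1 + p * (b / a - 1)) := by rw [hmul]
      _ = a + p * (b / a * a - a) := by ring
      _ = a + p * (b - a) := by rw [hba']
  have h4 : (a ^ p - b ^ p) * a ^ (1 - p) = a - b ^ p * a ^ (1 - p) := by
    rw [sub_mul, hmul]
  linarith

set_option maxHeartbeats 1000000 in
/-- the Kurdyka–Łojasiewicz finite-length lemma. If the iterates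
satisfy the KL inequality inside the ball `B(x*, ρ)`, sufficient decrease,
a step-length bound, and `f(x_c) ≥ f(x*)`, and the radius condition
`ρ > (2C_U C_K)/(η C_L (1-θ)) |f(x₁) - f(x*)|^{1-θ} + ‖x₁ - x*‖` holds, then all
iterates stay in `B(x*, ρ)` and the trajectory has finite length bounded by
`(2C_U C_K)/(η C_L (1-θ)) |f(x₁) - f(x*)|^{1-θ}`. -/
theorem stmt17 {n : ℕ} (f : EuclideanSpace ℝ (Fin n) → ℝ)
    (g : EuclideanSpace ℝ (Fin n) → EuclideanSpace ℝ (Fin n))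
    (xstar x₁ : EuclideanSpace ℝ (Fin n)) (ρ θ C_L C_U η C_K : ℝ)
    (hρ : 0 < ρ) (hθ : θ ∈ Set.Ico (0 : ℝ) 1)
    (hCL : 0 < C_L) (hCLU : C_L ≤ C_U) (hη : η ∈ Set.Ioo (0 : ℝ) 1)
    (hCK : 0 < C_K)
    (x : ℕ → EuclideanSpace ℝ (Fin n)) (α : ℕ → ℝ)
    (hx1 : x 0 = x₁) (hα : ∀ c, 0 < α c)
    (hKL : ∀ c, x c ∈ closedBall xstar ρ →
      |f (x c) - f xstar| ^ θ ≤ C_K * ‖g (x c)‖)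
    (hdec : ∀ c, f (x c) - f (x (c + 1)) ≥ η * α c * C_L * ‖g (x c)‖ ^ 2)
    (hstep : ∀ c, ‖x (c + 1) - x c‖ ≤ 2 * α c * C_U * ‖g (x c)‖)
    (hlb : ∀ c, f xstar ≤ f (x c))
    (hrad : (2 * C_U * C_K) / (η * C_L * (1 - θ)) * |f x₁ - f xstar| ^ (1 - θ)
        + ‖x₁ - xstar‖ < ρ) :
    (∀ c, x c ∈ closedBall xstar ρ) ∧
      ∀ N : ℕ, ∑ c ∈ Finset.range N, ‖x (c + 1) - x c‖ ≤
        (2 * C_U * C_K) / (η * C_L * (1 - θ)) * |f x₁ - f xstar| ^ (1 - θ) := by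
  obtain ⟨hθ0, hθ1⟩ := hθ
  obtain ⟨hη0, hη1⟩ := hη
  set p : ℝ := 1 - θ with hpdef
  have hp : 0 < p := by rw [hpdef]; linarith
  have hp1 : p ≤ 1 := by rw [hpdef]; linarith
  set K : ℝ := (2 * C_U * C_K) / (η * C_L * p) with hKdef
  have hCU : 0 < C_U := lt_of_lt_of_le hCL hCLU
  have hK : 0 < K := by
    rw [hKdef]
    exact div_pos (by positivity) (mul_pos (mul_pos hη0 hCL) hp)
  set F : ℕ → ℝ := fun c => f (x c) - f xstar with hFdef
  have hF0 : ∀ c, 0 ≤ F c := fun c => by simp only [hFdef]; linarith [hlb c]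
  have hFd : ∀ c, F (c + 1) ≤ F c := by
    intro c
    have h1 := hdec c
    have h2 : 0 ≤ η * α c * C_L * ‖g (x c)‖ ^ 2 :=
      mul_nonneg (mul_nonneg (mul_nonneg hη0.le (hα c).le) hCL.le) (sq_nonneg _)
    simp only [hFdef]
    linarith
  -- key per-step estimate
  have key : ∀ c, x c ∈ closedBall xstar ρ →
      ‖x (c + 1) - x c‖ ≤ K * ((F c) ^ p - (F (c + 1)) ^ p) := by
    intro c hc
    have hKLc := hKL c hc
    rw [show |f (x c) - f xstar| = F c from abs_of_nonneg (hF0 c)] at hKLc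
    have hdc : η * α c * C_L * ‖g (x c)‖ ^ 2 ≤ F c - F (c + 1) := by
      have := hdec c; simp only [hFdef]; linarith
    rcases eq_or_lt_of_le (hF0 c) with ha | ha
    · -- F c = 0, hence F (c+1) = 0 and g (x c) = 0
      have hb0 : F (c + 1) = 0 := by
        have h1 := hFd c; have h2 := hF0 (c + 1); linarith
      have hpos : 0 < η * α c * C_L := mul_pos (mul_pos hη0 (hα c)) hCL
      have hg0 : ‖g (x c)‖ = 0 := by
        by_contra hne
        have hgpos : 0 < ‖g (x c)‖ := lt_of_le_of_ne (norm_nonneg _) (Ne.symm hne)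
        nlinarith [hdc, mul_pos hpos (pow_pos hgpos 2)]
      rw [← ha, hb0, Real.zero_rpow hp.ne', sub_self, mul_zero]
      have hs := hstep c
      rw [hg0] at hs
      simpa using hs
    · -- F c > 0
      have hg : 0 < ‖g (x c)‖ := by
        nlinarith [Real.rpow_pos_of_pos ha θ, hKLc, norm_nonneg (g (x c)), hCK]
      have hb := hF0 (c + 1)
      have hba := hFd c
      set a := F c
      set b := F (c + 1)
      set G := ‖g (x c)‖
      have hconc : p * (a - b) ≤ (a ^ p - b ^ p) * a ^ θ := by
        have := stmt17_concave ha hb hp hp1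
        rwa [show (1 : ℝ) - p = θ by rw [hpdef]; ring] at this
      have hD : 0 ≤ a ^ p - b ^ p := by
        have := Real.rpow_le_rpow hb hba hp.le
        linarith
      have h1 : ‖x (c + 1) - x c‖ * (η * C_L * G) ≤ 2 * C_U * (a - b) := by
        have hs := hstep c
        have t1 : ‖x (c + 1) - x c‖ * (η * C_L * G) ≤ (2 * α c * C_U * G) * (η * C_L * G) :=
          mul_le_mul_of_nonneg_right hs (mul_nonneg (mul_nonneg hη0.le hCL.le) (norm_nonneg _))
        have t2 : (2 * α c * C_U * G) * (η * C_L * G) = 2 * C_U * (η * α c * C_L * G ^ 2) := by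
          ring
        have t3 : 2 * C_U * (η * α c * C_L * G ^ 2) ≤ 2 * C_U * (a - b) :=
          mul_le_mul_of_nonneg_left hdc (by linarith)
        rw [t2] at t1
        linarith
      have h2 : 2 * C_U * (a - b) * p ≤ 2 * C_U * ((a ^ p - b ^ p) * a ^ θ) := by
        have := mul_le_mul_of_nonneg_left hconc (by linarith : (0:ℝ) ≤ 2 * C_U)
        linarith
      have h3 : 2 * C_U * ((a ^ p - b ^ p) * a ^ θ) ≤ 2 * C_U * ((a ^ p - b ^ p) * (C_K * G)) :=
        mul_le_mul_of_nonneg_left (mul_le_mul_of_nonneg_left hKLc hD)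
          (by linarith : (0:ℝ) ≤ 2 * C_U)
      have h4 : ‖x (c + 1) - x c‖ * (η * C_L * p) * G ≤ 2 * C_U * C_K * (a ^ p - b ^ p) * G := by
        have t1 : ‖x (c + 1) - x c‖ * (η * C_L * G) * p ≤ 2 * C_U * (a - b) * p :=
          mul_le_mul_of_nonneg_right h1 hp.le
        nlinarith [t1, h2, h3]
      have h5 : ‖x (c + 1) - x c‖ * (η * C_L * p) ≤ 2 * C_U * C_K * (a ^ p - b ^ p) :=
        le_of_mul_le_mul_right h4 hg
      rw [hKdef, div_mul_eq_mul_div, le_div_iff₀ (mul_pos (mul_pos hη0 hCL) hp)]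
      linarith
  -- base quantity
  have hF0x : F 0 = |f x₁ - f xstar| := by
    have h0 : 0 ≤ f x₁ - f xstar := by rw [← hx1]; exact hF0 0
    simp only [hFdef]
    rw [hx1, abs_of_nonneg h0]
  rw [← hF0x] at hrad
  -- main induction
  have main : ∀ N, x N ∈ closedBall xstar ρ ∧
      ∑ c ∈ Finset.range N, ‖x (c + 1) - x c‖ ≤ K * ((F 0) ^ p - (F N) ^ p) := by
    intro N
    induction N with
    | zero =>
      constructor
      · rw [mem_closedBall, dist_eq_norm, hx1]
        have h1 : 0 ≤ K * (F 0) ^ p := mul_nonneg hK.le (Real.rpow_nonneg (hF0 0) p)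
        linarith
      · simp
    | succ N ih =>
      obtain ⟨hball, hsum⟩ := ih
      have hk := key N hball
      have hsum' : ∑ c ∈ Finset.range (N + 1), ‖x (c + 1) - x c‖ ≤
          K * ((F 0) ^ p - (F (N + 1)) ^ p) := by
        rw [Finset.sum_range_succ]
        nlinarith [hk, hsum]
      refine ⟨?_, hsum'⟩
      rw [mem_closedBall]
      have hd : dist (x (N + 1)) xstar ≤
          (∑ c ∈ Finset.range (N + 1), ‖x (c + 1) - x c‖) + ‖x₁ - xstar‖ := by
        have t1 := dist_le_range_sum_dist x (N + 1)
        have t2 : dist (x (N + 1)) xstar ≤ dist (x 0) (x (N + 1)) + dist (x 0) xstar := by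
          rw [dist_comm (x 0)]; exact dist_triangle _ _ _
        have t3 : ∀ i, dist (x i) (x (i + 1)) = ‖x (i + 1) - x i‖ := by
          intro i; rw [dist_eq_norm, norm_sub_rev]
        have t4 : dist (x 0) xstar = ‖x₁ - xstar‖ := by rw [dist_eq_norm, hx1]
        calc dist (x (N + 1)) xstar ≤ dist (x 0) (x (N + 1)) + dist (x 0) xstar := t2
          _ ≤ (∑ i ∈ Finset.range (N + 1), dist (x i) (x (i + 1))) + dist (x 0) xstar :=
              add_le_add_left t1 _
          _ = (∑ c ∈ Finset.range (N + 1), ‖x (c + 1) - x c‖) + ‖x₁ - xstar‖ := by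
              rw [t4]; congr 1; exact Finset.sum_congr rfl fun i _ => t3 i
      have hFpnn : 0 ≤ (F (N + 1)) ^ p := Real.rpow_nonneg (hF0 _) p
      have hfin : K * ((F 0) ^ p - (F (N + 1)) ^ p) ≤ K * (F 0) ^ p := by
        have h9 := mul_nonneg hK.le hFpnn
        linarith
      linarith
  refine ⟨fun c => (main c).1, fun N => ?_⟩
  have hFpnn : 0 ≤ (F N) ^ p := Real.rpow_nonneg (hF0 _) p
  have hm := (main N).2
  rw [← hF0x]
  have h9 := mul_nonneg hK.le hFpnn
  linarith
end
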